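/- arXiv:2401.16759 — 2 statements merged into one kernel-verified Lean document; each statement's English description precedes it below -/
import Mathlib

section
/- The function upd(sc, x) defined by: upd(sc,x) = sc - x + k if x ≥ k; upd(sc,x) = min(sc + b, M) if x < k and sc ≥ 0; upd(sc,x) = min(sc - x + k, 0) if x < k and sc < 0, satisfies the balance property: upd(sc + 1, x) ≥ upd(sc, x - 1) for all sc with sc + 1 ≤ M and all integers x. -/
noncomputable def upd (k M : ℤ) (b : ℝ) (sc : ℝ) (x : ℤ) : ℝ :=
  if x ≥ k then sc - x + k
  else if sc ≥ 0 then min (sc + b) M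
  else min (sc - x + k) 0

theorem upd_balance (k M : ℤ) (b : ℝ) (hk : 1 ≤ k) (hM : 1 ≤ M)
    (hb0 : 0 < b) (hb1 : b ≤ 1) :
    ∀ sc : ℝ, sc + 1 ≤ (M : ℝ) → ∀ x : ℤ,
      upd k M b (sc + 1) x ≥ upd k M b sc (x - 1) := by
  intro sc hsc x
  have hM0 : (0:ℝ) ≤ (M:ℝ) := by exact_mod_cast (by omega : (0:ℤ) ≤ M)
  unfold upd
  by_cases h1 : x - 1 ≥ k
  · have h2 : x ≥ k := by omega
    simp only [h1, h2, if_pos]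
    push_cast
    linarith
  · have h1' : ¬ (x - 1 ≥ k) := h1
    by_cases h2 : x ≥ k
    · -- x = k
      have hx : x = k := by omega
      simp only [h2, if_pos, h1', if_neg, if_false]
      by_cases hs : sc ≥ 0
      · simp only [hs, if_pos]
        have : min (sc + b) (M:ℝ) ≤ sc + b := min_le_left _ _
        subst hx; linarith
      · simp only [hs, if_neg, if_false]
        have : min (sc - ((x:ℝ) - 1) + (k:ℝ)) 0 ≤ sc - ((x:ℝ) - 1) + k :=
          min_le_left _ _
        subst hx; push_cast at this ⊢; linarith
    · simp only [h2, h1', if_neg, if_false]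
      by_cases hs1 : sc + 1 ≥ 0
      · simp only [hs1, if_pos]
        by_cases hs : sc ≥ 0
        · simp only [hs, if_pos]
          exact min_le_min (by linarith) le_rfl
        · simp only [hs, if_neg, if_false]
          have h0 : min (sc - ((x:ℝ) - 1) + (k:ℝ)) 0 ≤ 0 := min_le_right _ _
          have : (0:ℝ) ≤ min (sc + 1 + b) (M:ℝ) := le_min (by linarith) hM0
          push_cast
          linarith
      · have hs : ¬ (sc ≥ 0) := by intro h; apply hs1; linarith
        simp only [hs1, hs, if_neg, if_false]
        push_cast
        have : sc - ((x:ℝ) - 1) + (k:ℝ) = sc + 1 - (x:ℝ) + k := by ring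
        rw [this]
end

section
/- Let upd be a score function with tolerance k (satisfying properties (1)-(4)), let N ≤ -1 be an integer noise, let X > X̂ := k - N, and set sc₁ := upd(sc, X + N) and sc₁' := upd(sc, X̂ + N). Then sc₁' ≥ sc₁ + (X - X̂) and, moreover, sc₁' ≥ sc. -/
theorem perturbed_strategy_score_bound (M : ℝ) (k : ℤ) (upd : ℝ → ℤ → ℝ)
    (h1 : ∀ sc : ℝ, sc + 1 ≤ M → ∀ x : ℤ, upd (sc + 1) x ≥ upd sc (x - 1))
    (h2 : ∀ sc : ℝ, sc ≤ M → ∀ x : ℤ, upd sc x ≥ upd sc (x + 1))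
    (h3 : ∀ sc : ℝ, sc ≤ M → ∀ x : ℤ, x ≥ k → upd sc x ≥ upd sc (x + 1) + 1)
    (h4 : ∀ sc : ℝ, sc ≤ M → upd sc k ≥ sc)
    (sc : ℝ) (hsc : sc ≤ M) (N X : ℤ) (hN : N ≤ -1)
    (Xhat : ℤ) (hXhat : Xhat = k - N) (hX : X > Xhat)
    (sc₁ sc₁' : ℝ) (hsc₁ : sc₁ = upd sc (X + N)) (hsc₁' : sc₁' = upd sc (Xhat + N)) :
    sc₁' ≥ sc₁ + ((X : ℝ) - (Xhat : ℝ)) ∧ sc₁' ≥ sc := by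
  have hkey : ∀ n : ℕ, upd sc (k + n) + n ≤ upd sc k := by
    intro n
    induction n with
    | zero => simp
    | succ m ih =>
      have := h3 sc hsc (k + m) (by omega)
      push_cast
      push_cast at ih
      have : upd sc (k + (m + 1)) + 1 ≤ upd sc (k + m) := by
        have h := h3 sc hsc (k + m) (by omega)
        have : (k + (m : ℤ)) + 1 = k + ((m : ℤ) + 1) := by ring
        rw [this] at h
        linarith
      linarith
  have hXN : Xhat + N = k := by omega
  have hd : X + N = k + ((X - Xhat).toNat : ℤ) := by omega
  have h5 := hkey (X - Xhat).toNat
  rw [← hd] at h5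
  have hcast : ((X - Xhat).toNat : ℝ) = (X : ℝ) - (Xhat : ℝ) := by
    have : ((X - Xhat).toNat : ℤ) = X - Xhat := by omega
    exact_mod_cast congrArg (Int.cast : ℤ → ℝ) this
  constructor
  · rw [hsc₁, hsc₁', hXN]
    linarith [hcast ▸ h5]
  · rw [hsc₁', hXN]
    exact h4 sc hsc
end
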